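/- Let p ≥ 2 be an integer and set r = 2^(1/(p−1)). Then M₂^p ⊆ D̄₂(0; r, r) ⊆ B̄₂(0, r), where D̄₂(0; r₁, r₂) = {(z₁,z₂) ∈ 𝕄(2) : |z₁ − i·z₂| ≤ r₁ and |z₁ + i·z₂| ≤ r₂} is the closed discus and B̄₂(0, r) = {ζ ∈ 𝕄(2) : ‖ζ‖₂ ≤ r} is the closed ball. -/

import Mathlib

/-!
For a square root `u` of `-1` in `ℂ`, the map `(z₁, z₂) ↦ z₁ + u z₂` is multiplicative on
bicomplex numbers, so it sends the orbit of `0` under `Q_{p,c}` to the orbit of `0` under the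
complex polynomial `w ↦ w ^ p + (c₁ + u c₂)`, and it is bounded by twice the bicomplex norm.
For `u = ∓i` the images of `c` are the two idempotent components `c₁ ∓ i c₂`; the classical
escape criterion shows that a complex orbit stays bounded only if `|c₁ ∓ i c₂| ^ (p - 1) ≤ 2`.
The inclusion of the discus in the ball is the parallelogram law for `z₁` and `i z₂`.
-/

/-- Bicomplex multiplication on ℂ × ℂ. -/
def bcMul (z w : ℂ × ℂ) : ℂ × ℂ := (z.1 * w.1 - z.2 * w.2, z.1 * w.2 + z.2 * w.1)

/-- n-th power of a bicomplex number. -/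
def bcPow (z : ℂ × ℂ) : ℕ → ℂ × ℂ
  | 0 => (1, 0)
  | n + 1 => bcMul (bcPow z n) z

/-- The bicomplex norm ‖(z₁,z₂)‖₂ = √(|z₁|² + |z₂|²). -/
noncomputable def bcNorm (z : ℂ × ℂ) : ℝ :=
  Real.sqrt (‖z.1‖ ^ 2 + ‖z.2‖ ^ 2)

/-- The bicomplex polynomial Q_{p,c}(ζ) = ζ^p + c. -/
def bcQ (p : ℕ) (c : ℂ × ℂ) (z : ℂ × ℂ) : ℂ × ℂ := bcPow z p + c

/-- The bicomplex Multibrot set M₂^p. -/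
def M2 (p : ℕ) : Set (ℂ × ℂ) :=
  {c | ∃ M : ℝ, ∀ m : ℕ, 1 ≤ m → bcNorm ((bcQ p c)^[m] (0, 0)) ≤ M}

section EscapeCriterion

variable {𝕜 : Type*} [NormedDivisionRing 𝕜]

lemma mul_norm_pow_sub_one_le_norm_pow_succ_add {z c : 𝕜} (n : ℕ) (hcz : ‖c‖ ≤ ‖z‖) :
    ‖z‖ * (‖c‖ ^ n - 1) ≤ ‖z ^ (n + 1) + c‖ :=
  calc ‖z‖ * (‖c‖ ^ n - 1)
      ≤ ‖z‖ * (‖z‖ ^ n - 1) := by gcongr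
    _ = ‖z‖ ^ (n + 1) - ‖z‖ := by ring
    _ ≤ ‖z ^ (n + 1)‖ - ‖c‖ := by rw [norm_pow]; linarith
    _ ≤ ‖z ^ (n + 1) + c‖ := by
        simpa using norm_sub_norm_le (z ^ (n + 1)) (-c)

/-- Once `‖c‖ ^ n > 2`, each step multiplies the norm by at least `q = ‖c‖ ^ n - 1 > 1`. -/
lemma tendsto_norm_iterate_pow_succ_add_zero {c : 𝕜} {n : ℕ} (hc : 2 < ‖c‖ ^ n) :
    Filter.Tendsto (fun m ↦ ‖(fun w ↦ w ^ (n + 1) + c)^[m] 0‖) Filter.atTop Filter.atTop := by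
  set q := ‖c‖ ^ n - 1
  have hq : 1 < q := by linarith
  have hc0 : 0 < ‖c‖ := by
    by_contra! h
    have : ‖c‖ ^ n ≤ 1 := pow_le_one₀ (norm_nonneg c) (by linarith)
    linarith
  have lower : ∀ m : ℕ, ‖c‖ * q ^ m ≤ ‖(fun w ↦ w ^ (n + 1) + c)^[m + 1] 0‖ := by
    intro m
    induction m with
    | zero => simp
    | succ m ih =>
      have hcz : ‖c‖ ≤ ‖(fun w ↦ w ^ (n + 1) + c)^[m + 1] 0‖ :=
        le_trans (le_mul_of_one_le_right hc0.le (one_le_pow₀ hq.le)) ih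
      rw [Function.iterate_succ_apply']
      calc ‖c‖ * q ^ (m + 1) = ‖c‖ * q ^ m * q := by ring
        _ ≤ ‖(fun w ↦ w ^ (n + 1) + c)^[m + 1] 0‖ * q := by gcongr
        _ ≤ _ := mul_norm_pow_sub_one_le_norm_pow_succ_add n hcz
  rw [← Filter.tendsto_add_atTop_iff_nat 1]
  exact Filter.tendsto_atTop_mono lower
    ((tendsto_pow_atTop_atTop_of_one_lt hq).const_mul_atTop hc0)

lemma norm_pow_le_two_of_bounded_orbit {c : 𝕜} {n : ℕ} {B : ℝ}
    (hB : ∀ m : ℕ, 1 ≤ m → ‖(fun w ↦ w ^ (n + 1) + c)^[m] 0‖ ≤ B) : ‖c‖ ^ n ≤ 2 := by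
  by_contra! hc
  obtain ⟨m, hmB, hm⟩ := ((tendsto_norm_iterate_pow_succ_add_zero hc).eventually_gt_atTop B
    |>.and (Filter.eventually_ge_atTop 1)).exists
  exact (hB m hm).not_gt hmB

end EscapeCriterion

/-- For `u = ∓i` this is the idempotent component `z₁ ∓ i z₂`. -/
def bcComponent (u : ℂ) (z : ℂ × ℂ) : ℂ := z.1 + u * z.2

section Component

variable {u : ℂ}

lemma bcComponent_add (u : ℂ) (z w : ℂ × ℂ) :
    bcComponent u (z + w) = bcComponent u z + bcComponent u w := by
  simp only [bcComponent, Prod.fst_add, Prod.snd_add]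
  ring

lemma bcComponent_bcMul (hu : u * u = -1) (z w : ℂ × ℂ) :
    bcComponent u (bcMul z w) = bcComponent u z * bcComponent u w := by
  simp only [bcComponent, bcMul]
  linear_combination (-(z.2 * w.2)) * hu

lemma bcComponent_bcPow (hu : u * u = -1) (z : ℂ × ℂ) (n : ℕ) :
    bcComponent u (bcPow z n) = bcComponent u z ^ n := by
  induction n with
  | zero => simp [bcPow, bcComponent]
  | succ n ih => rw [bcPow, bcComponent_bcMul hu, ih, pow_succ]

lemma bcComponent_iterate_bcQ (hu : u * u = -1) (p : ℕ) (c : ℂ × ℂ) (m : ℕ) :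
    bcComponent u ((bcQ p c)^[m] (0, 0)) = (fun w ↦ w ^ p + bcComponent u c)^[m] 0 := by
  induction m with
  | zero => simp [bcComponent]
  | succ m ih =>
    rw [Function.iterate_succ_apply', Function.iterate_succ_apply', bcQ, bcComponent_add,
      bcComponent_bcPow hu, ih]

lemma norm_bcComponent_le (hu : ‖u‖ = 1) (z : ℂ × ℂ) : ‖bcComponent u z‖ ≤ 2 * bcNorm z := by
  have h₁ : ‖z.1‖ ≤ bcNorm z := Real.le_sqrt_of_sq_le (by nlinarith [sq_nonneg ‖z.2‖])
  have h₂ : ‖z.2‖ ≤ bcNorm z := Real.le_sqrt_of_sq_le (by nlinarith [sq_nonneg ‖z.1‖])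
  calc ‖bcComponent u z‖ ≤ ‖z.1‖ + ‖u * z.2‖ := norm_add_le _ _
    _ = ‖z.1‖ + ‖z.2‖ := by rw [norm_mul, hu, one_mul]
    _ ≤ 2 * bcNorm z := by linarith

lemma norm_bcComponent_pow_le_two_of_mem_M2 (hu : u * u = -1) (hu₁ : ‖u‖ = 1) {n : ℕ}
    {c : ℂ × ℂ} (hc : c ∈ M2 (n + 1)) : ‖bcComponent u c‖ ^ n ≤ 2 := by
  obtain ⟨M, hM⟩ := hc
  refine norm_pow_le_two_of_bounded_orbit (B := 2 * M) fun m hm ↦ ?_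
  rw [← bcComponent_iterate_bcQ hu]
  exact (norm_bcComponent_le hu₁ _).trans (by linarith [hM m hm])

end Component

lemma sqrt_norm_sq_add_norm_sq_le {E : Type*} [NormedAddCommGroup E] [InnerProductSpace ℝ E]
    {x y : E} {r : ℝ} (hr : 0 ≤ r) (hsub : ‖x - y‖ ≤ r) (hadd : ‖x + y‖ ≤ r) :
    Real.sqrt (‖x‖ ^ 2 + ‖y‖ ^ 2) ≤ r := by
  have parallelogram := parallelogram_law_with_norm ℝ x y
  refine Real.sqrt_le_iff.mpr ⟨hr, ?_⟩
  nlinarith [norm_nonneg (x - y), norm_nonneg (x + y)]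

theorem bicomplex_multibrot_subset_discus (p : ℕ) (hp : 2 ≤ p)
    (r : ℝ) (hr : r = (2 : ℝ) ^ ((1 : ℝ) / ((p : ℝ) - 1))) :
    M2 p ⊆ {z : ℂ × ℂ | ‖z.1 - Complex.I * z.2‖ ≤ r ∧
        ‖z.1 + Complex.I * z.2‖ ≤ r} ∧
    {z : ℂ × ℂ | ‖z.1 - Complex.I * z.2‖ ≤ r ∧
        ‖z.1 + Complex.I * z.2‖ ≤ r} ⊆ {z : ℂ × ℂ | bcNorm z ≤ r} := by
  obtain ⟨n, rfl⟩ : ∃ n, p = n + 1 := ⟨p - 1, by omega⟩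
  have hn : (0 : ℝ) < n := by exact_mod_cast (by omega : 0 < n)
  have hr : r = 2 ^ (n : ℝ)⁻¹ := by rw [hr]; push_cast; rw [add_sub_cancel_right, one_div]
  have hr₀ : 0 ≤ r := hr ▸ by positivity
  have le_r {a : ℝ} (ha : 0 ≤ a) (h : a ^ n ≤ 2) : a ≤ r := by
    rw [hr, Real.le_rpow_inv_iff_of_pos ha zero_le_two hn, Real.rpow_natCast]
    exact h
  refine ⟨fun c hc ↦ ⟨?_, ?_⟩, fun z ⟨hsub, hadd⟩ ↦ ?_⟩
  · have h := norm_bcComponent_pow_le_two_of_mem_M2 (u := -Complex.I) (by simp) (by simp) hc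
    rw [bcComponent, neg_mul, ← sub_eq_add_neg] at h
    exact le_r (norm_nonneg _) h
  · exact le_r (norm_nonneg _)
      (norm_bcComponent_pow_le_two_of_mem_M2 Complex.I_mul_I (by simp) hc)
  · have h := sqrt_norm_sq_add_norm_sq_le hr₀ hsub hadd
    rwa [norm_mul, Complex.norm_I, one_mul] at h
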